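/- Let S ⊆ {0,1}^n be a set of pairwise incomparable solutions with respect to m-COCZ (m even, m dividing n). Then |S| ≤ (n/m + 1)^{m/2}, and this bound is attained by any Pareto-optimal set, so the maximum cardinality of a set of mutually incomparable solutions equals (n/m + 1)^{m/2}. -/

import Mathlib

/-- Number of ones of a block `b : Fin L → Bool`. -/
def onesCount {L : ℕ} (b : Fin L → Bool) : ℕ :=
  (Finset.univ.filter (fun i : Fin L => b i = true)).card

/-- Number of zeros of a block `b : Fin L → Bool`. -/
def zerosCount {L : ℕ} (b : Fin L → Bool) : ℕ :=
  (Finset.univ.filter (fun i : Fin L => b i = false)).card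

/-- The m-COCZ benchmark, with `h = m/2` and block length `B = n/m`.
A search point is a pair: first half of length `n/2 = h*B`, and `h` blocks of
length `B` forming the second half. Objective `k` (0-based) is the ones-count
of the first half plus (ones of block `k/2` if `k` even, else zeros of block `k/2`). -/
def mCOCZ (h B : ℕ) (x : (Fin (h * B) → Bool) × (Fin h → Fin B → Bool)) :
    Fin (2 * h) → ℕ :=
  fun k =>
    onesCount x.1 +
      if (k : ℕ) % 2 = 0 then onesCount (x.2 ⟨(k : ℕ) / 2, by have := k.isLt; omega⟩)
      else zerosCount (x.2 ⟨(k : ℕ) / 2, by have := k.isLt; omega⟩)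

/-- `x` weakly dominates `y` with respect to the objective vector `f`. -/
def WeaklyDom {α : Type*} {m : ℕ} (f : α → Fin m → ℕ) (x y : α) : Prop :=
  ∀ k, f y k ≤ f x k

/-- `x` dominates `y`. -/
def Dom {α : Type*} {m : ℕ} (f : α → Fin m → ℕ) (x y : α) : Prop :=
  WeaklyDom f x y ∧ ∃ k, f y k < f x k

/-- `x` is Pareto-optimal. -/
def ParetoOpt {α : Type*} {m : ℕ} (f : α → Fin m → ℕ) (x : α) : Prop :=
  ¬ ∃ y, Dom f y x

/-!
Write `ℓ(x)` for the number of ones in the first half of `x` and `w(x) ∈ {0,…,B}^h` for the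
ones-counts of its blocks. The objectives of `x` are `ℓ(x) + w(x)ᵢ` and `ℓ(x) + B - w(x)ᵢ`,
so `x` weakly dominates `y` iff `|w(x)ᵢ - w(y)ᵢ| ≤ ℓ(x) - ℓ(y)` for every block `i`. Points
with the same profile `w` are therefore comparable, which bounds an incomparable set by the
number `(B + 1)^h` of profiles. Conversely, the points with first half all ones and block `i`
equal to `w i` ones followed by zeros realise every profile at the maximal `ℓ = h * B`; any
two of them are incomparable, and each is Pareto-optimal.
-/

theorem WeaklyDom.not_dom {α : Type*} {m : ℕ} {f : α → Fin m → ℕ} {x y : α}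
    (hxy : WeaklyDom f x y) : ¬ Dom f y x := by
  rintro ⟨-, k, hk⟩
  exact (hxy k).not_gt hk

theorem onesCount_add_zerosCount {L : ℕ} (b : Fin L → Bool) :
    onesCount b + zerosCount b = L := by
  simpa [onesCount, zerosCount] using
    Finset.card_filter_add_card_filter_not (s := Finset.univ) (fun i => b i = true)

theorem onesCount_le {L : ℕ} (b : Fin L → Bool) : onesCount b ≤ L :=
  (Finset.card_filter_le _ _).trans_eq (Finset.card_fin L)

theorem onesCount_const_true (L : ℕ) : onesCount (fun _ : Fin L => true) = L := by
  simp [onesCount]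

theorem onesCount_decide_val_lt {L c : ℕ} (hc : c ≤ L) :
    onesCount (fun j : Fin L => decide ((j : ℕ) < c)) = c := by
  simp [onesCount, Fin.card_filter_val_lt, hc]

section mCOCZ

variable {h B : ℕ}

local notation "Point" => (Fin (h * B) → Bool) × (Fin h → Fin B → Bool)

theorem mCOCZ_of_val_eq_two_mul (x : Point)
    {k : Fin (2 * h)} {i : Fin h} (hk : (k : ℕ) = 2 * i) :
    mCOCZ h B x k = onesCount x.1 + onesCount (x.2 i) := by
  have hi : (⟨(k : ℕ) / 2, by omega⟩ : Fin h) = i := Fin.ext (by simp only; omega)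
  simp only [mCOCZ, show (k : ℕ) % 2 = 0 by omega, if_true, hi]

theorem mCOCZ_of_val_eq_two_mul_add_one (x : Point)
    {k : Fin (2 * h)} {i : Fin h} (hk : (k : ℕ) = 2 * i + 1) :
    mCOCZ h B x k = onesCount x.1 + zerosCount (x.2 i) := by
  have hi : (⟨(k : ℕ) / 2, by omega⟩ : Fin h) = i := Fin.ext (by simp only; omega)
  simp only [mCOCZ, show (k : ℕ) % 2 ≠ 0 by omega, if_false, hi]

theorem weaklyDom_mCOCZ_iff (x y : Point) :
    WeaklyDom (mCOCZ h B) x y ↔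
      ∀ i, |(onesCount (x.2 i) : ℤ) - onesCount (y.2 i)| ≤
        (onesCount x.1 : ℤ) - onesCount y.1 := by
  have hx := fun i => onesCount_add_zerosCount (x.2 i)
  have hy := fun i => onesCount_add_zerosCount (y.2 i)
  constructor
  · intro hxy i
    have hone := hxy ⟨2 * i, by omega⟩
    have hzero := hxy ⟨2 * i + 1, by omega⟩
    rw [mCOCZ_of_val_eq_two_mul x rfl, mCOCZ_of_val_eq_two_mul y rfl] at hone
    rw [mCOCZ_of_val_eq_two_mul_add_one x rfl,
      mCOCZ_of_val_eq_two_mul_add_one y rfl] at hzero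
    have := hx i
    have := hy i
    rw [abs_le]
    omega
  · intro hw k
    obtain ⟨i, hk⟩ : ∃ i : Fin h, (k : ℕ) = 2 * i ∨ (k : ℕ) = 2 * i + 1 :=
      ⟨⟨k / 2, by omega⟩, by simp only; omega⟩
    have := abs_le.mp (hw i)
    have := hx i
    have := hy i
    rcases hk with hk | hk
    · rw [mCOCZ_of_val_eq_two_mul x hk, mCOCZ_of_val_eq_two_mul y hk]
      omega
    · rw [mCOCZ_of_val_eq_two_mul_add_one x hk, mCOCZ_of_val_eq_two_mul_add_one y hk]
      omega

def blockProfile (x : Point) : Fin h → Fin (B + 1) :=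
  fun i => ⟨onesCount (x.2 i), Nat.lt_succ_of_le (onesCount_le _)⟩

theorem weaklyDom_mCOCZ_of_blockProfile_eq {x y : Point}
    (hw : blockProfile x = blockProfile y) (hl : onesCount y.1 ≤ onesCount x.1) :
    WeaklyDom (mCOCZ h B) x y := by
  refine (weaklyDom_mCOCZ_iff x y).mpr fun i => ?_
  have hi : onesCount (x.2 i) = onesCount (y.2 i) := congrArg Fin.val (congrFun hw i)
  rw [hi, sub_self, abs_zero, sub_nonneg]
  exact_mod_cast hl

theorem blockProfile_injOn_of_pairwise_incomparable {S : Set Point}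
    (hS : S.Pairwise fun x y => ¬ WeaklyDom (mCOCZ h B) x y ∧ ¬ WeaklyDom (mCOCZ h B) y x) :
    S.InjOn blockProfile := by
  intro x hx y hy hw
  by_contra hxy
  rcases le_total (onesCount x.1) (onesCount y.1) with hl | hl
  · exact (hS hx hy hxy).2 (weaklyDom_mCOCZ_of_blockProfile_eq hw.symm hl)
  · exact (hS hx hy hxy).1 (weaklyDom_mCOCZ_of_blockProfile_eq hw hl)

def frontPoint (w : Fin h → Fin (B + 1)) : Point :=
  (fun _ => true, fun i j => decide ((j : ℕ) < w i))

theorem blockProfile_frontPoint (w : Fin h → Fin (B + 1)) : blockProfile (frontPoint w) = w :=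
  funext fun i => Fin.ext (onesCount_decide_val_lt (Nat.lt_succ_iff.mp (w i).isLt))

theorem frontPoint_injective : Function.Injective (frontPoint (h := h) (B := B)) :=
  Function.LeftInverse.injective blockProfile_frontPoint

theorem onesCount_fst_le_frontPoint (w : Fin h → Fin (B + 1)) (y : Point) :
    onesCount y.1 ≤ onesCount (frontPoint w).1 :=
  (onesCount_le y.1).trans_eq (onesCount_const_true _).symm

theorem blockProfile_eq_of_weaklyDom_mCOCZ_frontPoint {w : Fin h → Fin (B + 1)} {y : Point}
    (hy : WeaklyDom (mCOCZ h B) y (frontPoint w)) :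
    blockProfile y = w := by
  have hl := onesCount_fst_le_frontPoint w y
  refine funext fun i => ?_
  have hi := abs_le.mp ((weaklyDom_mCOCZ_iff _ _).mp hy i)
  rw [← blockProfile_frontPoint w]
  exact Fin.ext (by simp only [blockProfile]; omega)

theorem frontPoint_incomparable {w w' : Fin h → Fin (B + 1)} (hne : w ≠ w') :
    ¬ WeaklyDom (mCOCZ h B) (frontPoint w) (frontPoint w') := fun hw =>
  hne ((blockProfile_frontPoint w).symm.trans (blockProfile_eq_of_weaklyDom_mCOCZ_frontPoint hw))

theorem paretoOpt_mCOCZ_frontPoint (w : Fin h → Fin (B + 1)) :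
    ParetoOpt (mCOCZ h B) (frontPoint w) := by
  rintro ⟨y, hdom⟩
  refine (weaklyDom_mCOCZ_of_blockProfile_eq ?_ ?_).not_dom hdom
  · rw [blockProfile_frontPoint, blockProfile_eq_of_weaklyDom_mCOCZ_frontPoint hdom.1]
  · exact onesCount_fst_le_frontPoint w y

end mCOCZ

theorem mCOCZ_incomparable_card_general (h B : ℕ) :
    (∀ S : Finset ((Fin (h * B) → Bool) × (Fin h → Fin B → Bool)),
      (∀ x ∈ S, ∀ y ∈ S, x ≠ y →
        ¬ WeaklyDom (mCOCZ h B) x y ∧ ¬ WeaklyDom (mCOCZ h B) y x) →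
      S.card ≤ (B + 1) ^ h) ∧
    (∃ S : Finset ((Fin (h * B) → Bool) × (Fin h → Fin B → Bool)),
      (∀ x ∈ S, ∀ y ∈ S, x ≠ y →
        ¬ WeaklyDom (mCOCZ h B) x y ∧ ¬ WeaklyDom (mCOCZ h B) y x) ∧
      (∀ x ∈ S, ParetoOpt (mCOCZ h B) x) ∧ S.card = (B + 1) ^ h) := by
  refine ⟨fun S hS => ?_, Finset.univ.image frontPoint, ?_, ?_, ?_⟩
  · have hinj := blockProfile_injOn_of_pairwise_incomparable (S := ↑S)
      fun x hx y hy => hS x hx y hy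
    simpa using Finset.card_le_card_of_injOn (t := Finset.univ) blockProfile
      (fun _ _ => by simp) hinj
  · simp only [Finset.mem_image, Finset.mem_univ, true_and]
    rintro _ ⟨w, rfl⟩ _ ⟨w', rfl⟩ hne
    have hww : w ≠ w' := ne_of_apply_ne frontPoint hne
    exact ⟨frontPoint_incomparable hww, frontPoint_incomparable hww.symm⟩
  · simp only [Finset.mem_image, Finset.mem_univ, true_and]
    rintro _ ⟨w, rfl⟩
    exact paretoOpt_mCOCZ_frontPoint w
  · simp [Finset.card_image_of_injective _ frontPoint_injective]

theorem mCOCZ_incomparable_card (h B : ℕ) (hh : 1 ≤ h) (hB : 1 ≤ B) :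
    (∀ S : Finset ((Fin (h * B) → Bool) × (Fin h → Fin B → Bool)),
      (∀ x ∈ S, ∀ y ∈ S, x ≠ y →
        ¬ WeaklyDom (mCOCZ h B) x y ∧ ¬ WeaklyDom (mCOCZ h B) y x) →
      S.card ≤ (B + 1) ^ h) ∧
    (∃ S : Finset ((Fin (h * B) → Bool) × (Fin h → Fin B → Bool)),
      (∀ x ∈ S, ∀ y ∈ S, x ≠ y →
        ¬ WeaklyDom (mCOCZ h B) x y ∧ ¬ WeaklyDom (mCOCZ h B) y x) ∧
      (∀ x ∈ S, ParetoOpt (mCOCZ h B) x) ∧ S.card = (B + 1) ^ h) :=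
  mCOCZ_incomparable_card_general h B
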